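/- Let n, m be natural numbers, let Ã be a symmetric real n×n matrix such that I − Ã is positive semidefinite, let γ ∈ (0,1), and let S be a real n×m matrix. Define L_GSD(F) = tr((F − S)ᵀ(F − S)) + (1/(1−γ) − 1)·tr(Fᵀ(I − Ã)F). Then F* = (1−γ)·(I − γÃ)⁻¹·S is the unique minimizer of L_GSD: for every real n×m matrix F with F ≠ F*, one has L_GSD(F*) < L_GSD(F). -/

import Mathlib

open Matrix

/-- The graph-signal-denoising objective
`L_GSD(F) = tr((F − S)ᵀ(F − S)) + (1/(1−γ) − 1)·tr(Fᵀ(I − Ã)F)`. -/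
noncomputable def LGSD {n m : ℕ} (Atil : Matrix (Fin n) (Fin n) ℝ) (γ : ℝ)
    (S F : Matrix (Fin n) (Fin m) ℝ) : ℝ :=
  ((F - S)ᵀ * (F - S)).trace + (1 / (1 - γ) - 1) * (Fᵀ * (1 - Atil) * F).trace

/-! With `c = 1/(1−γ) − 1 ≥ 0` and `M = I + c(I − Ã)`, `L_GSD` is a quadratic in `F` with
gradient `2(MF − S)`, and `(1−γ)M = I − γÃ` shows that `F*` solves the normal equation
`MF* = S`. Expanding around `F*` therefore leaves only the second-order term:
`L_GSD(F* + D) = L_GSD(F*) + tr(DᵀD) + c·tr(Dᵀ(I − Ã)D)`, which exceeds `L_GSD(F*)` as soon as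
`D ≠ 0`. -/

namespace Matrix

theorem trace_transpose_mul_self_add_smul_pos {ι κ : Type*} [Fintype ι] [Fintype κ]
    {K : Matrix ι ι ℝ} (hK : K.PosSemidef) {c : ℝ} (hc : 0 ≤ c) {D : Matrix ι κ ℝ}
    (hD : D ≠ 0) : 0 < (Dᵀ * D).trace + c * (Dᵀ * K * D).trace := by
  have hDD : 0 < (Dᵀ * D).trace := by
    rw [← conjTranspose_eq_transpose_of_trivial]
    exact (posSemidef_conjTranspose_mul_self D).trace_nonneg.lt_of_ne'
      (trace_conjTranspose_mul_self_eq_zero_iff.not.mpr hD)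
  have hDKD : 0 ≤ (Dᵀ * K * D).trace := by
    rw [← conjTranspose_eq_transpose_of_trivial]
    exact (hK.conjTranspose_mul_mul_same D).trace_nonneg
  positivity

theorem PosSemidef.posDef_one_sub_smul {ι : Type*} [DecidableEq ι] {A : Matrix ι ι ℝ}
    (hA : (1 - A).PosSemidef) {γ : ℝ} (hγ : γ ∈ Set.Ico (0 : ℝ) 1) : (1 - γ • A).PosDef := by
  have h : 1 - γ • A = (1 - γ) • (1 : Matrix ι ι ℝ) + γ • (1 - A) := by
    rw [smul_sub, sub_smul, one_smul]; abel
  rw [h]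
  exact (PosDef.one.smul (sub_pos.mpr hγ.2)).add_posSemidef (hA.smul hγ.1)

end Matrix

variable {n m : ℕ} {Atil : Matrix (Fin n) (Fin n) ℝ} {γ : ℝ} {S : Matrix (Fin n) (Fin m) ℝ}

theorem LGSD_add (hsym : Atil.IsSymm) (F D : Matrix (Fin n) (Fin m) ℝ) :
    LGSD Atil γ S (F + D) = LGSD Atil γ S F
      + 2 * (Dᵀ * ((1 + (1 / (1 - γ) - 1) • (1 - Atil)) * F - S)).trace
      + ((Dᵀ * D).trace + (1 / (1 - γ) - 1) * (Dᵀ * (1 - Atil) * D).trace) := by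
  have hpenalty_cross : (Fᵀ * (1 - Atil) * D).trace = (Dᵀ * (1 - Atil) * F).trace := by
    rw [← trace_transpose, transpose_mul, transpose_mul, transpose_transpose, transpose_sub,
      transpose_one, hsym.eq, Matrix.mul_assoc]
  have hfit_cross : ((F - S)ᵀ * D).trace = (Dᵀ * (F - S)).trace := by
    rw [← trace_transpose, transpose_mul, transpose_transpose]
  unfold LGSD
  generalize 1 - Atil = K at hpenalty_cross ⊢
  simp only [add_sub_right_comm F D S, transpose_add, Matrix.add_mul, Matrix.mul_add,
    Matrix.mul_sub, Matrix.one_mul, ← Matrix.mul_assoc, Matrix.mul_smul, Matrix.smul_mul,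
    trace_add, trace_sub, trace_smul, hpenalty_cross, hfit_cross, smul_eq_mul]
  ring

theorem ppnp_solves_normal_equation (hpsd : (1 - Atil).PosSemidef)
    (hγ : γ ∈ Set.Ioo (0 : ℝ) 1) :
    (1 + (1 / (1 - γ) - 1) • (1 - Atil)) * ((1 - γ) • ((1 - γ • Atil)⁻¹ * S)) = S := by
  have hunit : IsUnit (1 - γ • Atil).det :=
    (isUnit_iff_isUnit_det _).mp (hpsd.posDef_one_sub_smul ⟨hγ.1.le, hγ.2⟩).isUnit
  have hscale : (1 - γ) • (1 + (1 / (1 - γ) - 1) • (1 - Atil)) = 1 - γ • Atil := by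
    have hcoeff : (1 - γ) * (1 / (1 - γ) - 1) = γ := by
      field_simp [(sub_pos.mpr hγ.2).ne']; ring
    rw [smul_add, smul_smul, hcoeff, sub_smul, one_smul, smul_sub]
    abel
  rw [Matrix.mul_smul, ← Matrix.smul_mul, hscale, mul_nonsing_inv_cancel_left _ _ hunit]

/-- The PPNP propagation `F* = (1−γ)(I − γÃ)⁻¹ S` is the unique minimizer of the
graph-signal-denoising objective: any other matrix attains a strictly larger value. -/
theorem ppnp_unique_minimizer_gsd (n m : ℕ) (Atil : Matrix (Fin n) (Fin n) ℝ)
    (hsym : Atil.IsSymm) (hpsd : (1 - Atil).PosSemidef)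
    (γ : ℝ) (hγ : γ ∈ Set.Ioo (0 : ℝ) 1)
    (S : Matrix (Fin n) (Fin m) ℝ) :
    ∀ F : Matrix (Fin n) (Fin m) ℝ, F ≠ (1 - γ) • ((1 - γ • Atil)⁻¹ * S) →
      LGSD Atil γ S ((1 - γ) • ((1 - γ • Atil)⁻¹ * S)) < LGSD Atil γ S F := by
  intro F hF
  set Fs := (1 - γ) • ((1 - γ • Atil)⁻¹ * S)
  obtain ⟨D, rfl⟩ : ∃ D, F = Fs + D := ⟨F - Fs, (add_sub_cancel Fs F).symm⟩
  have hD : D ≠ 0 := by rintro rfl; exact hF (add_zero Fs)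
  have hc : 0 ≤ 1 / (1 - γ) - 1 := by
    rw [sub_nonneg, le_div_iff₀ (sub_pos.mpr hγ.2)]; linarith [hγ.1]
  rw [LGSD_add hsym, ppnp_solves_normal_equation hpsd hγ, sub_self, Matrix.mul_zero, trace_zero,
    mul_zero, add_zero]
  exact lt_add_of_pos_right _ (trace_transpose_mul_self_add_smul_pos hpsd hc hD)
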